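/- arXiv:0706.0929 — 5 statements merged into one kernel-verified Lean document; each statement's English description precedes it below -/
import Mathlib

section
/- (Controller existence, abstract form, sufficiency direction) In a category S with binary pullbacks and a path subcategory P, let p_a : P → A be a P-faithful morphism and s_a : S → A any morphism. If there is a commuting diagram S ←^γ Z →^δ P with s_a ∘ γ = p_a ∘ δ and γ P-open, then the morphism s_a : S → A itself is a bisimulation controller for the plant: the induced morphism μ : Z → S ×_A P (with s ∘ μ = γ and p ∘ μ = δ, where s, p are the pullback projections) is P-open, yielding a diagram S ←^γ Z →^μ S ×_A P of P-open morphisms commuting over A. -/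
open CategoryTheory CategoryTheory.Limits

/-- `f : X ⟶ Y` is `P`-open (relative to the collection `IsPath` of path objects). -/
def POpen {S : Type*} [Category S] (IsPath : S → Prop) {X Y : S} (f : X ⟶ Y) : Prop :=
  ∀ ⦃C D : S⦄, IsPath C → IsPath D →
    ∀ (e : C ⟶ D) (c : C ⟶ X) (d : D ⟶ Y), c ≫ f = e ≫ d →
      ∃ r : D ⟶ X, e ≫ r = c ∧ r ≫ f = d

/-- `f : X ⟶ Y` is `P`-faithful: diagonal lifts of lifting problems whose left edge is a
morphism between path objects are unique. -/
def PFaithful {S : Type*} [Category S] (IsPath : S → Prop) {X Y : S} (f : X ⟶ Y) : Prop :=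
  ∀ ⦃C D : S⦄, IsPath C → IsPath D →
    ∀ (e : C ⟶ D) (c : C ⟶ X) (d : D ⟶ Y), c ≫ f = e ≫ d →
      ∀ r s : D ⟶ X, e ≫ r = c → r ≫ f = d → e ≫ s = c → s ≫ f = d → r = s

/-! The induced map `μ` satisfies `μ ≫ s = γ`, which is `P`-open, and the projection `s` is
`P`-faithful as a pullback of `p_a`. A lift `r` for `γ` is then a lift for `μ`: `r ≫ μ` and the
given bottom edge both solve the lifting problem obtained by composing with `s`, whose solution is
unique. -/

section

variable {S : Type*} [Category S] {IsPath : S → Prop}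

theorem PFaithful.of_isPullback {X Y B A : S} {fst : X ⟶ Y} {snd : X ⟶ B} {f : Y ⟶ A}
    {g : B ⟶ A} (hP : IsPullback fst snd f g) (hg : PFaithful IsPath g) :
    PFaithful IsPath fst := by
  intro C D hC hD e c d hsq r s her hrf hes hsf
  have hsq' : (c ≫ snd) ≫ g = e ≫ d ≫ f := by
    rw [Category.assoc, ← hP.w, ← Category.assoc, hsq, Category.assoc]
  have hsnd : r ≫ snd = s ≫ snd := by
    refine hg hC hD e (c ≫ snd) (d ≫ f) hsq' _ _ ?_ ?_ ?_ ?_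
    · rw [← Category.assoc, her]
    · rw [Category.assoc, ← hP.w, ← Category.assoc, hrf]
    · rw [← Category.assoc, hes]
    · rw [Category.assoc, ← hP.w, ← Category.assoc, hsf]
  exact hP.hom_ext (hrf.trans hsf.symm) hsnd

theorem POpen.of_comp_of_pFaithful {X Y W : S} {g : X ⟶ Y} {f : Y ⟶ W}
    (hgf : POpen IsPath (g ≫ f)) (hf : PFaithful IsPath f) : POpen IsPath g := by
  intro C D hC hD e c d hsq
  have hsq' : (c ≫ g) ≫ f = e ≫ d ≫ f := by rw [hsq, Category.assoc]
  obtain ⟨r, her, hrf⟩ := hgf hC hD e c (d ≫ f) (by rw [← Category.assoc, hsq'])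
  refine ⟨r, her, hf hC hD e (c ≫ g) (d ≫ f) hsq' _ _ ?_ ?_ hsq.symm rfl⟩
  · rw [← Category.assoc, her]
  · rw [Category.assoc, hrf]

end

/-- Sufficiency: if `p_a` is `P`-faithful and there is a span `S ← Z → P` over `A` with
the left leg `γ` `P`-open, then the specification itself is a bisimulation controller:
the induced morphism `μ : Z ⟶ S ×_A P` is `P`-open, yielding a span
`S ←γ Z →μ S ×_A P` of `P`-open morphisms commuting over `A`. -/
theorem controller_exists_sufficiency {S : Type*} [Category S] [HasPullbacks S]
    (IsPath : S → Prop) {Sp P A : S} (sa : Sp ⟶ A) (pa : P ⟶ A)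
    (hfaith : PFaithful IsPath pa)
    {Z : S} (γ : Z ⟶ Sp) (δ : Z ⟶ P) (hγ : POpen IsPath γ)
    (h : γ ≫ sa = δ ≫ pa) :
    POpen IsPath (pullback.lift γ δ h) ∧
    γ ≫ sa = pullback.lift γ δ h ≫ pullback.fst sa pa ≫ sa := by
  refine ⟨POpen.of_comp_of_pFaithful ?_ (hfaith.of_isPullback (IsPullback.of_hasPullback sa pa)),
    (pullback.lift_fst_assoc γ δ h sa).symm⟩
  rwa [pullback.lift_fst]
end

section
/- In the proof of the sufficiency direction of the controller synthesis theorem, the key lifting step holds: given the pullback S ×_A P of s_a : S → A and p_a : P → A with p_a P-faithful, the induced morphism μ : Z → S ×_A P with s ∘ μ = γ (γ P-open) and p ∘ μ = δ, and a lifting problem consisting of e : C → D in P, c : C → Z, d : D → S ×_A P with μ ∘ c = d ∘ e, any diagonal r : D → Z obtained by lifting through the P-open morphism γ = s ∘ μ (i.e., r ∘ e = c and γ ∘ r = s ∘ d) also satisfies μ ∘ r = d. -/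
open CategoryTheory CategoryTheory.Limits

section

variable {S : Type*} [Category S] {IsPath : S → Prop}

theorem pFaithful_iff {X Y : S} (f : X ⟶ Y) :
    PFaithful IsPath f ↔ ∀ ⦃C D : S⦄, IsPath C → IsPath D → ∀ (e : C ⟶ D) (r s : D ⟶ X),
      e ≫ r = e ≫ s → r ≫ f = s ≫ f → r = s := by
  constructor
  · intro hf C D hC hD e r s he hrs
    exact hf hC hD e (e ≫ r) (r ≫ f) (Category.assoc _ _ _) r s rfl rfl he.symm hrs.symm
  · rintro hf C D hC hD e c d - r s hr hrd hs hsd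
    exact hf hC hD e r s (hr.trans hs.symm) (hrd.trans hsd.symm)

theorem PFaithful.ext {X Y : S} {f : X ⟶ Y} (hf : PFaithful IsPath f) {C D : S}
    (hC : IsPath C) (hD : IsPath D) (e : C ⟶ D) {r s : D ⟶ X}
    (he : e ≫ r = e ≫ s) (hrs : r ≫ f = s ≫ f) : r = s :=
  (pFaithful_iff f).1 hf hC hD e r s he hrs

theorem PFaithful.pullback_fst {Sp P A : S} (sa : Sp ⟶ A) {pa : P ⟶ A} [HasPullback sa pa]
    (hpa : PFaithful IsPath pa) : PFaithful IsPath (pullback.fst sa pa) := by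
  refine (pFaithful_iff _).2 fun C D hC hD e r s he hfst => pullback.hom_ext hfst ?_
  refine hpa.ext hC hD e (by simp only [← Category.assoc, he]) ?_
  simp only [Category.assoc, ← pullback.condition, reassoc_of% hfst]

end

theorem key_lifting_step_general {S : Type*} [Category S] [HasPullbacks S]
    (IsPath : S → Prop) {Sp P A : S} (sa : Sp ⟶ A) (pa : P ⟶ A)
    (hfaith : PFaithful IsPath pa)
    {Z : S} (γ : Z ⟶ Sp) (δ : Z ⟶ P)
    (h : γ ≫ sa = δ ≫ pa)
    {C D : S} (hC : IsPath C) (hD : IsPath D)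
    (e : C ⟶ D) (c : C ⟶ Z) (d : D ⟶ pullback sa pa)
    (hsq : c ≫ pullback.lift γ δ h = e ≫ d)
    (r : D ⟶ Z) (hre : e ≫ r = c) (hrγ : r ≫ γ = d ≫ pullback.fst sa pa) :
    r ≫ pullback.lift γ δ h = d :=
  (hfaith.pullback_fst sa).ext hC hD e (by rw [reassoc_of% hre, hsq])
    (by rw [Category.assoc, pullback.lift_fst, hrγ])

/-- The key lifting step in the sufficiency proof: a diagonal `r` obtained by lifting the
problem through the `P`-open morphism `γ = s ∘ μ` also satisfies `μ ∘ r = d`. -/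
theorem key_lifting_step {S : Type*} [Category S] [HasPullbacks S]
    (IsPath : S → Prop) {Sp P A : S} (sa : Sp ⟶ A) (pa : P ⟶ A)
    (hfaith : PFaithful IsPath pa)
    {Z : S} (γ : Z ⟶ Sp) (δ : Z ⟶ P) (hγ : POpen IsPath γ)
    (h : γ ≫ sa = δ ≫ pa)
    {C D : S} (hC : IsPath C) (hD : IsPath D)
    (e : C ⟶ D) (c : C ⟶ Z) (d : D ⟶ pullback sa pa)
    (hsq : c ≫ pullback.lift γ δ h = e ≫ d)
    (r : D ⟶ Z) (hre : e ≫ r = c) (hrγ : r ≫ γ = d ≫ pullback.fst sa pa) :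
    r ≫ pullback.lift γ δ h = d :=
  key_lifting_step_general IsPath sa pa hfaith γ δ h hC hD e c d hsq r hre hrγ
end

section
/- Let T_P be a deterministic transition system and T_S a transition system over the same label set L. If there exists a simulation relation R from T_S to T_P (with (ι_S, ι_P) ∈ R and R-related states matching transitions of T_S by transitions of T_P with equal labels), then, using T_C = T_S as controller, T_S ∥ T_P (parallel composition with synchronization on all labels, restricted to reachable states) is bisimilar to T_S. -/
structure TS (Q L : Type*) where
  init : Q
  tr : Q → L → Q → Prop

def par {Q₁ Q₂ L : Type*} (T₁ : TS Q₁ L) (T₂ : TS Q₂ L) : TS (Q₁ × Q₂) L where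
  init := (T₁.init, T₂.init)
  tr p l q := T₁.tr p.1 l q.1 ∧ T₂.tr p.2 l q.2

def IsSim {Q₁ Q₂ L : Type*} (T₁ : TS Q₁ L) (T₂ : TS Q₂ L) (R : Q₁ → Q₂ → Prop) : Prop :=
  R T₁.init T₂.init ∧
  ∀ p₁ p₂, R p₁ p₂ → ∀ l q₁, T₁.tr p₁ l q₁ → ∃ q₂, T₂.tr p₂ l q₂ ∧ R q₁ q₂

def IsBisim {Q₁ Q₂ L : Type*} (T₁ : TS Q₁ L) (T₂ : TS Q₂ L) (R : Q₁ → Q₂ → Prop) : Prop :=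
  IsSim T₁ T₂ R ∧
  ∀ p₁ p₂, R p₁ p₂ → ∀ l q₂, T₂.tr p₂ l q₂ → ∃ q₁, T₁.tr p₁ l q₁ ∧ R q₁ q₂

def Deterministic {Q L : Type*} (T : TS Q L) : Prop :=
  ∀ p l q₁ q₂, T.tr p l q₁ → T.tr p l q₂ → q₁ = q₂

/-- If `T_P` is deterministic and there is a simulation relation from `T_S` to `T_P`,
then, using `T_C = T_S` as controller, `T_S ∥ T_P` is bisimilar to `T_S`. -/
theorem controller_from_simulation {QS QP L : Type*}
    (TS' : TS QS L) (TP : TS QP L) (hdet : Deterministic TP)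
    (R : QS → QP → Prop) (hsim : IsSim TS' TP R) :
    ∃ B : QS → QS × QP → Prop, IsBisim TS' (par TS' TP) B := by
  obtain ⟨hinit, hstep⟩ := hsim
  refine ⟨fun q p => p.1 = q ∧ R q p.2, ⟨⟨rfl, hinit⟩, ?_⟩, ?_⟩
  · rintro p₁ ⟨a, b⟩ ⟨rfl, hR⟩ l q₁ htr
    obtain ⟨q₂, hq₂, hR'⟩ := hstep a b hR l q₁ htr
    exact ⟨(q₁, q₂), ⟨htr, hq₂⟩, rfl, hR'⟩
  · rintro p₁ ⟨a, b⟩ ⟨rfl, hR⟩ l ⟨c, d⟩ ⟨h1, h2⟩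
    obtain ⟨q₂, hq₂, hR'⟩ := hstep a b hR l c h1
    exact ⟨c, h1, rfl, hdet b l q₂ d hq₂ h2 ▸ hR'⟩
end

section
/- Conversely, let T_P and T_S be transition systems over label set L. If there exists a controller transition system T_C such that T_C ∥ T_P is bisimilar to T_S, then there exists a simulation relation from T_S to T_P. -/
theorem IsSim.par_snd {Q₁ Q₂ Q₃ L : Type*} {T₁ : TS Q₁ L} {T₂ : TS Q₂ L} {T₃ : TS Q₃ L}
    {R : Q₁ → Q₂ × Q₃ → Prop} (h : IsSim T₁ (par T₂ T₃) R) :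
    IsSim T₁ T₃ (fun s p => ∃ c, R s (c, p)) := by
  obtain ⟨hinit, hstep⟩ := h
  refine ⟨⟨T₂.init, hinit⟩, ?_⟩
  rintro s p ⟨c, hR⟩ l s' htr
  obtain ⟨⟨c', p'⟩, ⟨-, hp⟩, hR'⟩ := hstep s (c, p) hR l s' htr
  exact ⟨p', hp, c', hR'⟩

/-- If some controller `T_C` makes `T_C ∥ T_P` bisimilar to `T_S`, then there is a
simulation relation from `T_S` to `T_P`. -/
theorem simulation_from_controller {QS QP L : Type*}
    (TS' : TS QS L) (TP : TS QP L)
    (hctrl : ∃ (QC : Type) (TC : TS QC L) (B : QS → QC × QP → Prop),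
      IsBisim TS' (par TC TP) B) :
    ∃ R : QS → QP → Prop, IsSim TS' TP R := by
  obtain ⟨_, _, _, hsim, -⟩ := hctrl
  exact ⟨_, hsim.par_snd⟩
end

section
/- Behavioral parallel composition via shared variables is a pullback in Set-based behavioral systems: given behavioral systems X1 ⊆ ∐_{I} (X_1 × Y)^I and X2 ⊆ ∐_{I} (X_2 × Y)^I (sets of partial trajectories over open intervals I containing 0), the shared-variable composition X1 ∥_y X2 = {(x1, x2) defined on a common interval I | ∃ y : I → Y with (x1,y) ∈ X1 and (x2,y) ∈ X2} is (up to the evident identification) the pullback of the projections X1 → A and X2 → A onto the y-component, where A = ∐_I Y^I is the full behavioral system on Y. -/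
/-- Time intervals: open intervals `]-a, b[` with `a, b > 0`. -/
def Ivl : Type := { I : Set ℝ // ∃ a b : ℝ, 0 < a ∧ 0 < b ∧ I = Set.Ioo (-a) b }

/-- A (partial) behavior for the variable `x` with values in `X`: a time interval together
with a function on it. -/
def Behavior (X : Type*) := Σ I : Ivl, (I.1 → X)

/-- A behavioral system on `X` is a set of behaviors. -/
abbrev BehSys (X : Type*) := Set (Behavior X)

/-- Letterwise (pointwise in time) application of a map on value sets to a behavior. -/
def mapBeh {X Y : Type*} (f : X → Y) (w : Behavior X) : Behavior Y :=
  ⟨w.1, fun t => f (w.2 t)⟩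

/-- A map `f` on value sets is a morphism of behavioral systems if it takes behaviors of
`B₁` into behaviors of `B₂`. -/
def IsMor {X Y : Type*} (B₁ : BehSys X) (B₂ : BehSys Y) (f : X → Y) : Prop :=
  ∀ w ∈ B₁, mapBeh f w ∈ B₂

/-- Shared-variable parallel composition `𝒳₁ ∥_y 𝒳₂`. -/
def shComp {X₁ X₂ Y : Type*} (B₁ : BehSys (X₁ × Y)) (B₂ : BehSys (X₂ × Y)) :
    BehSys (X₁ × X₂) :=
  { w | ∃ y : w.1.1 → Y,
      (⟨w.1, fun t => ((w.2 t).1, y t)⟩ : Behavior (X₁ × Y)) ∈ B₁ ∧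
      (⟨w.1, fun t => ((w.2 t).2, y t)⟩ : Behavior (X₂ × Y)) ∈ B₂ }

/-- The behavioral system on value set `X₁ × X₂ × Y` whose behaviors project into `B₁`
and `B₂`: the pullback object of the two projections onto the `y`-component. -/
def pbSys {X₁ X₂ Y : Type*} (B₁ : BehSys (X₁ × Y)) (B₂ : BehSys (X₂ × Y)) :
    BehSys (X₁ × X₂ × Y) :=
  { w | mapBeh (fun v => (v.1, v.2.2)) w ∈ B₁ ∧ mapBeh (fun v => (v.2.1, v.2.2)) w ∈ B₂ }

/-!
Behaviors are sets of trajectories and morphisms act letterwise, so everything reduces to the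
pullback of `X₁ × Y → Y ← X₂ × Y` in sets, which is `X₁ × X₂ × Y`. A map `γ` into `X₁ × X₂ × Y`
is a morphism into `pbSys B₁ B₂` exactly when its two projections are morphisms into `B₁` and
`B₂`, so the universal property in behavioral systems is inherited from the one in sets.
Forgetting the shared component of a behavior of `pbSys B₁ B₂` gives `B₁ ∥_y B₂`, the
forgotten trajectory being the witness `y` in the definition of `shComp`.
-/

section Pullback

variable {V X₁ X₂ Y : Type*}

theorem existsUnique_pullback_lift (α : V → X₁ × Y) (β : V → X₂ × Y)
    (h : Prod.snd ∘ α = Prod.snd ∘ β) :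
    ∃! γ : V → X₁ × X₂ × Y,
      (fun v => ((γ v).1, (γ v).2.2)) = α ∧ (fun v => ((γ v).2.1, (γ v).2.2)) = β := by
  refine ⟨fun v => ((α v).1, (β v).1, (α v).2), ⟨rfl, ?_⟩, ?_⟩
  · funext v
    rw [show (α v).2 = (β v).2 from congrFun h v]
  · rintro γ ⟨rfl, rfl⟩
    rfl

theorem isMor_pbSys_iff (W : BehSys V) (B₁ : BehSys (X₁ × Y)) (B₂ : BehSys (X₂ × Y))
    (γ : V → X₁ × X₂ × Y) :
    IsMor W (pbSys B₁ B₂) γ ↔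
      IsMor W B₁ (fun v => ((γ v).1, (γ v).2.2)) ∧
        IsMor W B₂ (fun v => ((γ v).2.1, (γ v).2.2)) := by
  simp only [IsMor, ← forall₂_and]
  rfl

theorem image_pbSys_eq_shComp (B₁ : BehSys (X₁ × Y)) (B₂ : BehSys (X₂ × Y)) :
    mapBeh (fun v : X₁ × X₂ × Y => (v.1, v.2.1)) '' pbSys B₁ B₂ = shComp B₁ B₂ := by
  ext w
  constructor
  · rintro ⟨w', ⟨h₁, h₂⟩, rfl⟩
    exact ⟨fun t => (w'.2 t).2.2, h₁, h₂⟩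
  · rintro ⟨y, h₁, h₂⟩
    exact ⟨⟨w.1, fun t => ((w.2 t).1, (w.2 t).2, y t)⟩, ⟨h₁, h₂⟩, rfl⟩

end Pullback

/-- Shared-variable composition is, up to the evident identification, the pullback of the
projections `𝒳₁ → 𝒜` and `𝒳₂ → 𝒜` onto the `y`-component, where `𝒜 = ∐_I Y^I` is the
full behavioral system on `Y`. -/
theorem behavioral_composition_is_pullback {X₁ X₂ Y : Type*}
    (B₁ : BehSys (X₁ × Y)) (B₂ : BehSys (X₂ × Y)) :
    -- the cone legs are morphisms
    IsMor (pbSys B₁ B₂) B₁ (fun v => (v.1, v.2.2)) ∧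
    IsMor (pbSys B₁ B₂) B₂ (fun v => (v.2.1, v.2.2)) ∧
    -- the square over the full system 𝒜 on Y commutes
    (Prod.snd ∘ (fun v : X₁ × X₂ × Y => (v.1, v.2.2))
      = Prod.snd ∘ (fun v : X₁ × X₂ × Y => (v.2.1, v.2.2))) ∧
    -- universal property
    (∀ (V' : Type*) (W : BehSys V') (α' : V' → X₁ × Y) (β' : V' → X₂ × Y),
      IsMor W B₁ α' → IsMor W B₂ β' →
      Prod.snd ∘ α' = Prod.snd ∘ β' →
      ∃! γ : V' → X₁ × X₂ × Y,
        IsMor W (pbSys B₁ B₂) γ ∧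
        (fun v => ((γ v).1, (γ v).2.2)) = α' ∧
        (fun v => ((γ v).2.1, (γ v).2.2)) = β') ∧
    -- the evident identification: projecting away the shared variable yields `𝒳₁ ∥_y 𝒳₂`
    ((fun w => mapBeh (fun v : X₁ × X₂ × Y => (v.1, v.2.1)) w) '' pbSys B₁ B₂
      = shComp B₁ B₂) := by
  refine ⟨fun _ hw => hw.1, fun _ hw => hw.2, rfl, ?_, image_pbSys_eq_shComp B₁ B₂⟩
  intro V' W α' β' hα hβ hsnd
  obtain ⟨γ, ⟨hγ₁, hγ₂⟩, hγ_unique⟩ := existsUnique_pullback_lift α' β' hsnd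
  have hγ_mor : IsMor W (pbSys B₁ B₂) γ :=
    (isMor_pbSys_iff W B₁ B₂ γ).2 ⟨hγ₁ ▸ hα, hγ₂ ▸ hβ⟩
  exact ⟨γ, ⟨hγ_mor, hγ₁, hγ₂⟩, fun δ hδ => hγ_unique δ hδ.2⟩
end
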